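/- arXiv:1111.6750 — 3 statements merged into one kernel-verified Lean document; each statement's English description precedes it below -/
import Mathlib

section
/- Let γ₁, γ₂ : [0,1] → G be C¹ paths into the group of invertible n×n complex matrices, and let λ : Mₙ(ℂ) → ℂ be a linear map vanishing on commutators. Then for all t, λ((γ₁(t)γ₂(t))⁻¹ · d/dt(γ₁(t)γ₂(t))) = λ(γ₁(t)⁻¹γ₁'(t)) + λ(γ₂(t)⁻¹γ₂'(t)). -/
attribute [local instance] Matrix.linftyOpNormedAddCommGroup Matrix.linftyOpNormedSpace
  Matrix.linftyOpNormedRing Matrix.linftyOpNormedAlgebra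

/-! With `D = du * v + u * dv` the derivative of the product, `(uv)⁻¹ D = v⁻¹ (u⁻¹ du) v + v⁻¹ dv`,
and a map vanishing on commutators does not see the conjugation by `v`. -/

theorem map_units_inv_mul_mul_of_tracial {R M F : Type*} [Monoid R] [FunLike F R M] {f : F}
    (hf : ∀ a b : R, f (a * b) = f (b * a)) (u : Rˣ) (x : R) : f (↑u⁻¹ * x * u) = f x := by
  rw [mul_assoc, hf, mul_assoc, Units.mul_inv, mul_one]

theorem map_units_mul_inv_mul_leibniz_of_tracial {R M F : Type*} [Semiring R] [AddCommMonoid M]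
    [FunLike F R M] [AddMonoidHomClass F R M] {f : F} (hf : ∀ a b : R, f (a * b) = f (b * a))
    (u v : Rˣ) (du dv : R) :
    f (↑(u * v)⁻¹ * (du * v + u * dv)) = f (↑u⁻¹ * du) + f (↑v⁻¹ * dv) := by
  have hsplit : ↑(u * v)⁻¹ * (du * v + u * dv) = ↑v⁻¹ * (↑u⁻¹ * du) * v + ↑v⁻¹ * dv := by
    simp only [mul_inv_rev, Units.val_mul, mul_add, mul_assoc, Units.inv_mul_cancel_left]
  rw [hsplit, map_add, map_units_inv_mul_mul_of_tracial hf]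

/-- For `C¹` paths `γ₁, γ₂` of invertible matrices and a linear functional `λ` vanishing on
commutators, `λ((γ₁γ₂)⁻¹ (γ₁γ₂)') = λ(γ₁⁻¹ γ₁') + λ(γ₂⁻¹ γ₂')`. -/
theorem stmt11 (n : ℕ) (γ₁ γ₂ : ℝ → Matrix (Fin n) (Fin n) ℂ)
    (h₁ : ∀ t : ℝ, DifferentiableAt ℝ γ₁ t) (h₂ : ∀ t : ℝ, DifferentiableAt ℝ γ₂ t)
    (hu₁ : ∀ t : ℝ, IsUnit (γ₁ t)) (hu₂ : ∀ t : ℝ, IsUnit (γ₂ t))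
    (lam : Matrix (Fin n) (Fin n) ℂ →ₗ[ℂ] ℂ)
    (hlam : ∀ A B : Matrix (Fin n) (Fin n) ℂ, lam (A * B) = lam (B * A)) :
    ∀ t : ℝ, lam ((γ₁ t * γ₂ t)⁻¹ * deriv (fun s => γ₁ s * γ₂ s) t)
      = lam ((γ₁ t)⁻¹ * deriv γ₁ t) + lam ((γ₂ t)⁻¹ * deriv γ₂ t) := by
  intro t
  obtain ⟨u, hu⟩ := hu₁ t
  obtain ⟨v, hv⟩ := hu₂ t
  -- `rw [deriv_fun_mul]` fails: its product comes from the local `NormedRing` instance.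
  have hderiv : deriv (fun s => γ₁ s * γ₂ s) t = deriv γ₁ t * γ₂ t + γ₁ t * deriv γ₂ t :=
    deriv_fun_mul (h₁ t) (h₂ t)
  rw [hderiv, ← hu, ← hv, ← Units.val_mul, ← Matrix.coe_units_inv,
    ← Matrix.coe_units_inv, ← Matrix.coe_units_inv]
  exact map_units_mul_inv_mul_leibniz_of_tracial hlam u v _ _
end

section
/- Let G = GL(n, ℂ), let θ and φ be two angles such that the matrix A has no eigenvalues on the rays L_θ and L_φ, and let log_θ A, log_φ A denote the logarithms defined via holomorphic functional calculus with branch cuts along L_θ and L_φ respectively (0 ≤ θ < φ < 2π). Then log_θ A - log_φ A = -2πi P, where P is the spectral projection of A onto the eigenvalues with argument in the sector (θ, φ); in particular P² = P. -/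
/-!
Let `L` be a logarithm of `A` whose spectrum lies in a horizontal strip of height `2π`, so that
`exp` is injective on it. Then the generalized eigenspace of `A` for an eigenvalue `λ` lies in the
generalized eigenspace of `L` for the unique logarithm `μ` of `λ` in the strip, and on it
`N = L - μ` is nilpotent with `exp N = λ⁻¹ A`. A nilpotent `N` is recovered from `exp N` by the
truncated series of `log (1 + x)`, since `X ^ m` divides `log_m ∘ (exp_m - 1) - X` for the
truncations at order `m`. Hence `Lθ - Lφ` acts on each generalized eigenspace of `A` as a scalar
`μθ - μφ ∈ 2πiℤ`, and the positions of the two strips leave only `0` and `-2πi`. So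
`P = (-2πi)⁻¹ (Lθ - Lφ)` acts there as `0` or `1`, hence is idempotent.
-/

open scoped Matrix

namespace MatrixLog

open Complex Polynomial Module.End Real
open scoped Nat

section TruncatedSeries

variable (K : Type*) [Field K]

noncomputable def truncExp (m : ℕ) : K[X] :=
  ∑ k ∈ Finset.range m, C (k ! : K)⁻¹ * X ^ k

noncomputable def truncLogOneAdd (m : ℕ) : K[X] :=
  ∑ j ∈ Finset.range m, C ((-1) ^ j * ((j : K) + 1)⁻¹) * X ^ (j + 1)

variable {K}

theorem X_dvd_truncExp_sub_one {m : ℕ} (hm : 0 < m) : (X : K[X]) ∣ truncExp K m - 1 := by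
  obtain ⟨m, rfl⟩ := Nat.exists_eq_add_of_le' hm
  rw [truncExp, Finset.sum_range_succ', X_dvd_iff]
  simp [coeff_X_pow]

variable [CharZero K]

theorem derivative_truncExp_succ (m : ℕ) :
    derivative (truncExp K (m + 1)) = truncExp K m := by
  rw [truncExp, Finset.sum_range_succ', derivative_add, derivative_sum]
  simp only [pow_zero, mul_one, derivative_C, add_zero, derivative_C_mul_X_pow,
    Nat.add_sub_cancel, truncExp]
  refine Finset.sum_congr rfl fun k _ => congrArg (C · * X ^ k) ?_
  rw [Nat.factorial_succ]
  push_cast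
  field_simp

theorem derivative_truncLogOneAdd (m : ℕ) :
    derivative (truncLogOneAdd K m) = ∑ j ∈ Finset.range m, (-X) ^ j := by
  rw [truncLogOneAdd, derivative_sum]
  refine Finset.sum_congr rfl fun j _ => ?_
  rw [derivative_C_mul_X_pow, Nat.add_sub_cancel, neg_pow (X : K[X]), ← C_1, ← C_neg, ← C_pow]
  congr 2
  push_cast
  field_simp

end TruncatedSeries

theorem X_pow_succ_dvd_of_X_pow_dvd_derivative {R : Type*} [CommRing R] [NoZeroDivisors R]
    [CharZero R] {F : R[X]} {m : ℕ} (h0 : F.eval 0 = 0) (h : X ^ m ∣ derivative F) :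
    X ^ (m + 1) ∣ F := by
  rw [X_pow_dvd_iff] at h ⊢
  rintro (_ | d) hd
  · rwa [coeff_zero_eq_eval_zero]
  · simpa [coeff_derivative, Nat.cast_add_one_ne_zero] using h d (by omega)

theorem X_pow_dvd_truncLogOneAdd_comp_sub_X {K : Type*} [Field K] [CharZero K] (m : ℕ) :
    (X : K[X]) ^ m ∣ (truncLogOneAdd K m).comp (truncExp K m - 1) - X := by
  rcases m with _ | m
  · simp
  set y := truncExp K (m + 1) - 1
  set G := ∑ j ∈ Finset.range (m + 1), (-y) ^ j
  have hy : X ∣ y := X_dvd_truncExp_sub_one m.succ_pos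
  have hG : G * (1 + y) = 1 - (-y) ^ (m + 1) := by
    linear_combination -geom_sum_mul (-y) (m + 1)
  have hy' : derivative y = (1 + y) - C (m ! : K)⁻¹ * X ^ m := by
    rw [derivative_sub, derivative_one, sub_zero, derivative_truncExp_succ, add_sub_cancel,
      truncExp, truncExp, Finset.sum_range_succ, add_sub_cancel_right]
  have hderiv : derivative ((truncLogOneAdd K (m + 1)).comp y - X)
      = -(-y) ^ (m + 1) - C (m ! : K)⁻¹ * X ^ m * G := by
    rw [derivative_sub, derivative_comp, derivative_truncLogOneAdd, derivative_X, hy']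
    simp only [sum_comp, pow_comp, neg_comp, X_comp]
    linear_combination hG
  apply X_pow_succ_dvd_of_X_pow_dvd_derivative
  · simp [y, truncLogOneAdd, truncExp, eval_finsetSum, Finset.sum_range_succ']
  · rw [hderiv]
    refine dvd_sub (dvd_neg.2 ?_) (dvd_mul_of_dvd_left (dvd_mul_left _ _) _)
    exact (pow_dvd_pow X m.le_succ).trans (pow_dvd_pow_of_dvd (dvd_neg.2 hy) _)

section NilpotentOnVector

variable {R ι : Type*} [CommRing R] [Fintype ι] [DecidableEq ι]

theorem eqOn_aeval_mulVec {F G : Matrix ι ι R} {S : Set (ι → R)} (hS : Set.MapsTo (F *ᵥ ·) S S)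
    (hFG : Set.EqOn (F *ᵥ ·) (G *ᵥ ·) S) (p : R[X]) :
    Set.EqOn (aeval F p *ᵥ ·) (aeval G p *ᵥ ·) S := by
  induction p using Polynomial.induction_on with
  | C a => intro w _; simp
  | add p q hp hq => intro w hw; simp [Matrix.add_mulVec, hp hw, hq hw]
  | monomial k a ih =>
    intro w hw
    have h := (ih (hS hw)).trans (congrArg _ (hFG hw))
    simpa only [pow_succ, ← mul_assoc, map_mul, aeval_X, Matrix.mulVec_mulVec] using h

theorem aeval_mulVec_eq_zero_of_X_pow_dvd {N : Matrix ι ι R} {v : ι → R} {m : ℕ}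
    (hv : N ^ m *ᵥ v = 0) {p : R[X]} (hp : X ^ m ∣ p) : aeval N p *ᵥ v = 0 := by
  obtain ⟨q, rfl⟩ := hp
  rw [mul_comm, map_mul, map_pow, aeval_X, ← Matrix.mulVec_mulVec, hv, Matrix.mulVec_zero]

end NilpotentOnVector

section MatrixExp

variable {𝕂 ι : Type*} [RCLike 𝕂] [Fintype ι] [DecidableEq ι] {N : Matrix ι ι 𝕂}
  {v : ι → 𝕂} {m : ℕ}

attribute [local instance] Matrix.linftyOpNormedRing Matrix.linftyOpNormedAlgebra in
theorem exp_mulVec_of_pow_mulVec_eq_zero (hv : N ^ m *ᵥ v = 0) :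
    NormedSpace.exp N *ᵥ v = aeval N (truncExp 𝕂 m) *ᵥ v := by
  have hsum := ((NormedSpace.expSeries_summable' (𝕂 := 𝕂) N).hasSum.map
    (Matrix.mulVec.addMonoidHomLeft v) (continuous_id.matrix_mulVec continuous_const))
  have hterm : ∀ k ∉ Finset.range m, ((k ! : 𝕂)⁻¹ • N ^ k) *ᵥ v = 0 := fun k hk => by
    rw [Finset.mem_range, not_lt] at hk
    rw [Matrix.smul_mulVec, ← Nat.sub_add_cancel hk, pow_add, ← Matrix.mulVec_mulVec, hv,
      Matrix.mulVec_zero, smul_zero]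
  calc NormedSpace.exp N *ᵥ v = ∑' k, ((k ! : 𝕂)⁻¹ • N ^ k) *ᵥ v := by
        rw [NormedSpace.exp_eq_tsum 𝕂]; exact hsum.tsum_eq.symm
    _ = ∑ k ∈ Finset.range m, ((k ! : 𝕂)⁻¹ • N ^ k) *ᵥ v := tsum_eq_sum hterm
    _ = aeval N (truncExp 𝕂 m) *ᵥ v := by
        simp [truncExp, Matrix.sum_mulVec, Algebra.smul_def]

theorem aeval_exp_sub_one_mulVec (hv : N ^ m *ᵥ v = 0) (p : 𝕂[X]) :
    aeval (NormedSpace.exp N - 1) p *ᵥ v = aeval N (p.comp (truncExp 𝕂 m - 1)) *ᵥ v := by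
  set S := {w : ι → 𝕂 | N ^ m *ᵥ w = 0}
  have hmaps : Set.MapsTo ((NormedSpace.exp N - 1) *ᵥ ·) S S := fun w (hw : _ = 0) => by
    change N ^ m *ᵥ (NormedSpace.exp N - 1) *ᵥ w = 0
    have hcomm := ((Commute.refl N).exp_right.sub_right (Commute.one_right N)).pow_left m
    rw [Matrix.mulVec_mulVec, hcomm.eq, ← Matrix.mulVec_mulVec, hw, Matrix.mulVec_zero]
  have heq : Set.EqOn ((NormedSpace.exp N - 1) *ᵥ ·) (aeval N (truncExp 𝕂 m - 1) *ᵥ ·) S :=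
    fun w hw => by simp [Matrix.sub_mulVec, exp_mulVec_of_pow_mulVec_eq_zero hw]
  exact (eqOn_aeval_mulVec hmaps heq p hv).trans (by rw [aeval_comp])

theorem mulVec_eq_aeval_exp_sub_one_mulVec (hv : N ^ m *ᵥ v = 0) :
    N *ᵥ v = aeval (NormedSpace.exp N - 1) (truncLogOneAdd 𝕂 m) *ᵥ v := by
  have h := aeval_mulVec_eq_zero_of_X_pow_dvd hv (X_pow_dvd_truncLogOneAdd_comp_sub_X m)
  rw [map_sub, aeval_X, Matrix.sub_mulVec, sub_eq_zero] at h
  rw [aeval_exp_sub_one_mulVec hv, h]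

theorem mulVec_eq_of_exp_eq {N₁ N₂ : Matrix ι ι 𝕂} (h : NormedSpace.exp N₁ = NormedSpace.exp N₂)
    (h₁ : N₁ ^ m *ᵥ v = 0) (h₂ : N₂ ^ m *ᵥ v = 0) : N₁ *ᵥ v = N₂ *ᵥ v := by
  rw [mulVec_eq_aeval_exp_sub_one_mulVec h₁, mulVec_eq_aeval_exp_sub_one_mulVec h₂, h]

theorem exp_sub_one_pow_mulVec_eq_zero (hv : N ^ m *ᵥ v = 0) :
    (NormedSpace.exp N - 1) ^ m *ᵥ v = 0 := by
  rcases Nat.eq_zero_or_pos m with rfl | hm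
  · simpa using hv
  have h := aeval_exp_sub_one_mulVec hv (X ^ m)
  rw [map_pow, aeval_X, pow_comp, X_comp] at h
  rw [h]
  exact aeval_mulVec_eq_zero_of_X_pow_dvd hv (pow_dvd_pow_of_dvd (X_dvd_truncExp_sub_one hm) m)

end MatrixExp

section Eigenspaces

variable {ι : Type*} [Fintype ι] [DecidableEq ι]

theorem exp_eq_exp_smul_exp_sub_smul_one (L : Matrix ι ι ℂ) (μ : ℂ) :
    NormedSpace.exp L = cexp μ • NormedSpace.exp (L - μ • 1) := by
  have hc : Commute (μ • 1 : Matrix ι ι ℂ) (L - μ • 1) := (Commute.one_left _).smul_left μ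
  have hμ : NormedSpace.exp (μ • 1 : Matrix ι ι ℂ) = cexp μ • 1 := by
    rw [Matrix.smul_one_eq_diagonal, Matrix.exp_diagonal, Pi.exp_def, ← Complex.exp_eq_exp_ℂ,
      ← Matrix.smul_one_eq_diagonal]
  calc NormedSpace.exp L = NormedSpace.exp (μ • 1 + (L - μ • 1)) := by rw [add_sub_cancel]
    _ = cexp μ • NormedSpace.exp (L - μ • 1) := by
      rw [Matrix.exp_add_of_commute _ _ hc, hμ, smul_mul_assoc, one_mul]

theorem mem_maxGenEigenspace_toLin'_iff {K : Type*} [Field K] (B : Matrix ι ι K) (μ : K)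
    (v : ι → K) :
    v ∈ maxGenEigenspace (Matrix.toLin' B) μ ↔ (B - μ • 1) ^ Fintype.card ι *ᵥ v = 0 := by
  have h (k : ℕ) : (Matrix.toLin' B - μ • 1) ^ k = Matrix.toLin' ((B - μ • 1) ^ k) := by
    rw [Matrix.toLin'_pow, map_sub, map_smul, Matrix.toLin'_one, one_eq_id]
  rw [maxGenEigenspace_eq_genEigenspace_finrank, Module.finrank_fintype_fun_eq_card,
    mem_genEigenspace_nat, LinearMap.mem_ker, h, Matrix.toLin'_apply]

theorem mem_spectrum_of_maxGenEigenspace_ne_bot {K : Type*} [Field K] {B : Matrix ι ι K} {μ : K}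
    (h : maxGenEigenspace (Matrix.toLin' B) μ ≠ ⊥) : μ ∈ spectrum K B := by
  rw [← Matrix.spectrum_toLin', ← hasEigenvalue_iff_mem_spectrum]
  exact HasUnifEigenvalue.lt zero_lt_one h

theorem maxGenEigenspace_le_maxGenEigenspace_exp (L : Matrix ι ι ℂ) (μ : ℂ) :
    maxGenEigenspace (Matrix.toLin' L) μ
      ≤ maxGenEigenspace (Matrix.toLin' (NormedSpace.exp L)) (cexp μ) := by
  intro v hv
  rw [mem_maxGenEigenspace_toLin'_iff] at hv ⊢
  rw [exp_eq_exp_smul_exp_sub_smul_one L μ, ← smul_sub, _root_.smul_pow, Matrix.smul_mulVec,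
    exp_sub_one_pow_mulVec_eq_zero hv, smul_zero]

theorem maxGenEigenspace_eq_iSup_of_le {K V : Type*} [Field K] [IsAlgClosed K] [AddCommGroup V]
    [Module K V] [FiniteDimensional K V] {f g : Module.End K V} {σ : K → K}
    (h : ∀ μ, maxGenEigenspace f μ ≤ maxGenEigenspace g (σ μ)) (c : K) :
    maxGenEigenspace g c = ⨆ (μ) (_ : σ μ = c), maxGenEigenspace f μ := by
  set Y := ⨆ (μ) (_ : σ μ = c), maxGenEigenspace f μ
  set Z := ⨆ (μ) (_ : ¬σ μ = c), maxGenEigenspace f μ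
  have hY : Y ≤ maxGenEigenspace g c := iSup₂_le fun μ hμ => hμ ▸ h μ
  have hZ : Disjoint (maxGenEigenspace g c) Z :=
    (g.independent_genEigenspace ⊤ c).mono_right
      (iSup₂_le fun μ hμ => (h μ).trans (le_iSup₂_of_le (σ μ) hμ le_rfl))
  calc maxGenEigenspace g c = (Y ⊔ Z) ⊓ maxGenEigenspace g c := by
        rw [← iSup_split, iSup_maxGenEigenspace_eq_top, top_inf_eq]
    _ = Y := by rw [sup_inf_assoc_of_le Z hY, inf_comm, hZ.eq_bot, sup_bot_eq]

theorem exists_mem_spectrum_mem_maxGenEigenspace {L : Matrix ι ι ℂ}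
    (hL : Set.InjOn cexp (spectrum ℂ L)) {c : ℂ} {v : ι → ℂ}
    (hv : v ∈ maxGenEigenspace (Matrix.toLin' (NormedSpace.exp L)) c) (hv0 : v ≠ 0) :
    ∃ μ ∈ spectrum ℂ L, cexp μ = c ∧ v ∈ maxGenEigenspace (Matrix.toLin' L) μ := by
  rw [maxGenEigenspace_eq_iSup_of_le (maxGenEigenspace_le_maxGenEigenspace_exp L)] at hv
  by_cases hc : ∃ μ₀ ∈ spectrum ℂ L, cexp μ₀ = c
  · obtain ⟨μ₀, hμ₀, rfl⟩ := hc
    refine ⟨μ₀, hμ₀, rfl, (iSup₂_le fun μ hμ => ?_ : _ ≤ maxGenEigenspace _ μ₀) hv⟩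
    rcases eq_or_ne (maxGenEigenspace (Matrix.toLin' L) μ) ⊥ with h | h
    · exact h ▸ bot_le
    · rw [hL (mem_spectrum_of_maxGenEigenspace_ne_bot h) hμ₀ hμ]
  · have hbot : ⨆ (μ) (_ : cexp μ = c), maxGenEigenspace (Matrix.toLin' L) μ = ⊥ :=
      iSup₂_eq_bot.2 fun μ hμ =>
        by_contra fun h => hc ⟨μ, mem_spectrum_of_maxGenEigenspace_ne_bot h, hμ⟩
    rw [hbot, Submodule.mem_bot] at hv
    exact absurd hv hv0

theorem exists_sub_mulVec_eq_smul_of_exp_eq {L₁ L₂ : Matrix ι ι ℂ}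
    (hexp : NormedSpace.exp L₁ = NormedSpace.exp L₂) (h₁ : Set.InjOn cexp (spectrum ℂ L₁))
    (h₂ : Set.InjOn cexp (spectrum ℂ L₂)) {c : ℂ} {v : ι → ℂ}
    (hv : v ∈ maxGenEigenspace (Matrix.toLin' (NormedSpace.exp L₁)) c) (hv0 : v ≠ 0) :
    ∃ μ₁ ∈ spectrum ℂ L₁, ∃ μ₂ ∈ spectrum ℂ L₂,
      cexp μ₁ = cexp μ₂ ∧ (L₁ - L₂) *ᵥ v = (μ₁ - μ₂) • v := by
  obtain ⟨μ₁, hμ₁, rfl, hv₁⟩ := exists_mem_spectrum_mem_maxGenEigenspace h₁ hv hv0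
  obtain ⟨μ₂, hμ₂, he, hv₂⟩ := exists_mem_spectrum_mem_maxGenEigenspace h₂ (hexp ▸ hv) hv0
  have hN : NormedSpace.exp (L₁ - μ₁ • 1) = NormedSpace.exp (L₂ - μ₂ • 1) := by
    have h := exp_eq_exp_smul_exp_sub_smul_one L₁ μ₁
    rw [hexp, exp_eq_exp_smul_exp_sub_smul_one L₂ μ₂, he] at h
    exact smul_right_injective _ (Complex.exp_ne_zero μ₁) h.symm
  have h := mulVec_eq_of_exp_eq hN ((mem_maxGenEigenspace_toLin'_iff _ _ _).1 hv₁)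
    ((mem_maxGenEigenspace_toLin'_iff _ _ _).1 hv₂)
  refine ⟨μ₁, hμ₁, μ₂, hμ₂, he.symm, ?_⟩
  simp only [Matrix.sub_mulVec, Matrix.smul_mulVec, Matrix.one_mulVec] at h ⊢
  rw [sub_smul, sub_eq_sub_iff_sub_eq_sub.1 h]

theorem eq_of_forall_maxGenEigenspace_mulVec_eq {K : Type*} [Field K] [IsAlgClosed K]
    (A : Matrix ι ι K) {B C : Matrix ι ι K}
    (h : ∀ c, ∀ v ∈ maxGenEigenspace (Matrix.toLin' A) c, B *ᵥ v = C *ᵥ v) : B = C := by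
  have hker : LinearMap.ker (Matrix.toLin' (B - C)) = ⊤ := by
    rw [eq_top_iff, ← iSup_maxGenEigenspace_eq_top (Matrix.toLin' A)]
    exact iSup_le fun c v hv => by simp [h c v hv]
  exact sub_eq_zero.1 (Matrix.toLin'.injective (by rw [LinearMap.ker_eq_top.1 hker, map_zero]))

end Eigenspaces

theorem eq_or_eq_sub_two_pi_I_of_exp_eq {z w : ℂ} {a b : ℝ} (h : cexp z = cexp w)
    (hz : a < z.im ∧ z.im < a + 2 * π) (hw : b < w.im ∧ w.im < b + 2 * π) (hab : a ≤ b)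
    (hba : b ≤ a + 2 * π) : z = w ∨ z = w - 2 * π * I := by
  obtain ⟨n, hn⟩ := Complex.exp_eq_exp_iff_exists_int.1 h
  have him : z.im = w.im + n * (2 * π) := by simpa using congrArg Complex.im hn
  have hn1 : (n : ℝ) < 1 := by nlinarith [Real.pi_pos]
  have hn2 : (-2 : ℝ) < n := by nlinarith [Real.pi_pos]
  obtain rfl | rfl : n = 0 ∨ n = -1 := by
    have : n < 1 := by exact_mod_cast hn1
    have : -2 < n := by exact_mod_cast hn2
    omega
  · left; simpa using hn
  · right; rw [hn]; push_cast; ring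

theorem injOn_exp_im_strip (a : ℝ) : Set.InjOn cexp {z | a < z.im ∧ z.im < a + 2 * π} := by
  intro z hz w hw h
  refine (eq_or_eq_sub_two_pi_I_of_exp_eq h hz hw le_rfl (by linarith [Real.pi_pos])).resolve_right
    fun hzw => ?_
  have : z.im = w.im - 2 * π := by simp [hzw]
  linarith [hz.1, hw.2]

theorem sub_mulVec_eq_zero_or_eq_smul_of_spectrum_im {ι : Type*} [Fintype ι] [DecidableEq ι]
    {L₁ L₂ : Matrix ι ι ℂ} {a b : ℝ} (hab : a ≤ b) (hba : b ≤ a + 2 * π)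
    (hexp : NormedSpace.exp L₁ = NormedSpace.exp L₂)
    (h₁ : ∀ z ∈ spectrum ℂ L₁, a < z.im ∧ z.im < a + 2 * π)
    (h₂ : ∀ z ∈ spectrum ℂ L₂, b < z.im ∧ z.im < b + 2 * π) {c : ℂ} {v : ι → ℂ}
    (hv : v ∈ maxGenEigenspace (Matrix.toLin' (NormedSpace.exp L₁)) c) :
    (L₁ - L₂) *ᵥ v = 0 ∨ (L₁ - L₂) *ᵥ v = -(2 * π * I) • v := by
  rcases eq_or_ne v 0 with rfl | hv0
  · simp
  obtain ⟨μ₁, hμ₁, μ₂, hμ₂, he, hL⟩ := exists_sub_mulVec_eq_smul_of_exp_eq hexp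
    ((injOn_exp_im_strip a).mono h₁) ((injOn_exp_im_strip b).mono h₂) hv hv0
  rcases eq_or_eq_sub_two_pi_I_of_exp_eq he (h₁ μ₁ hμ₁) (h₂ μ₂ hμ₂) hab hba with rfl | rfl
  · left; rw [hL, sub_self, zero_smul]
  · right; rw [hL, sub_sub_cancel_left]

end MatrixLog

open MatrixLog

theorem stmt17_general (n : ℕ) (A Lθ Lφ : Matrix (Fin n) (Fin n) ℂ) (θ φ : ℝ)
    (h0θ : 0 ≤ θ) (hθφ : θ < φ) (hφ : φ < 2 * Real.pi)
    (hexpθ : NormedSpace.exp Lθ = A)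
    (hspecθ : ∀ z ∈ spectrum ℂ Lθ, θ < z.im ∧ z.im < θ + 2 * Real.pi)
    (hexpφ : NormedSpace.exp Lφ = A)
    (hspecφ : ∀ z ∈ spectrum ℂ Lφ, φ < z.im ∧ z.im < φ + 2 * Real.pi) :
    ∃ P : Matrix (Fin n) (Fin n) ℂ, P * P = P ∧ Commute A P ∧
      Lθ - Lφ = (-(2 * (Real.pi : ℂ) * Complex.I)) • P := by
  set c : ℂ := -(2 * (Real.pi : ℂ) * Complex.I) with hc_def
  have hc : c ≠ 0 := by simp [c, Real.pi_ne_zero]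
  have hP (z : ℂ) (v) (hv : v ∈ Module.End.maxGenEigenspace (Matrix.toLin' A) z) :
      (c⁻¹ • (Lθ - Lφ)) *ᵥ v = 0 ∨ (c⁻¹ • (Lθ - Lφ)) *ᵥ v = v := by
    subst hexpθ
    rcases sub_mulVec_eq_zero_or_eq_smul_of_spectrum_im hθφ.le (by linarith) hexpφ.symm hspecθ
      hspecφ hv with h | h
    · left; rw [Matrix.smul_mulVec, h, smul_zero]
    · right; rw [Matrix.smul_mulVec, h, ← hc_def, smul_smul, inv_mul_cancel₀ hc, one_smul]
  refine ⟨c⁻¹ • (Lθ - Lφ), ?_, ?_, by rw [smul_smul, mul_inv_cancel₀ hc, one_smul]⟩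
  · refine eq_of_forall_maxGenEigenspace_mulVec_eq A fun z v hv => ?_
    rw [← Matrix.mulVec_mulVec]
    rcases hP z v hv with h | h <;> rw [h]
    exacts [Matrix.mulVec_zero _, h]
  · have hAθ : Commute A Lθ := hexpθ ▸ (Commute.refl Lθ).exp_left
    have hAφ : Commute A Lφ := hexpφ ▸ (Commute.refl Lφ).exp_left
    exact (hAθ.sub_right hAφ).smul_right _

/-- If `log_θ A` and `log_φ A` are the logarithms of an invertible matrix `A` with respect to
two spectral cuts `0 ≤ θ < φ < 2π` (characterized as commuting logarithms of `A` whose spectra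
lie in the horizontal strips determined by the branch cuts), then
`log_θ A - log_φ A = -2πi P` for an idempotent `P` commuting with `A`
(the spectral projection onto the eigenvalues with argument in `(θ, φ)`). -/
theorem stmt17 (n : ℕ) (A Lθ Lφ : Matrix (Fin n) (Fin n) ℂ) (θ φ : ℝ)
    (h0θ : 0 ≤ θ) (hθφ : θ < φ) (hφ : φ < 2 * Real.pi)
    (hA : IsUnit A)
    (hrayθ : ∀ z ∈ spectrum ℂ A, ∀ r : ℝ, 0 ≤ r →
      z ≠ (r : ℂ) * Complex.exp ((θ : ℂ) * Complex.I))
    (hrayφ : ∀ z ∈ spectrum ℂ A, ∀ r : ℝ, 0 ≤ r →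
      z ≠ (r : ℂ) * Complex.exp ((φ : ℂ) * Complex.I))
    (hexpθ : NormedSpace.exp Lθ = A) (hcommθ : Commute A Lθ)
    (hspecθ : ∀ z ∈ spectrum ℂ Lθ, θ < z.im ∧ z.im < θ + 2 * Real.pi)
    (hexpφ : NormedSpace.exp Lφ = A) (hcommφ : Commute A Lφ)
    (hspecφ : ∀ z ∈ spectrum ℂ Lφ, φ < z.im ∧ z.im < φ + 2 * Real.pi) :
    ∃ P : Matrix (Fin n) (Fin n) ℂ, P * P = P ∧ Commute A P ∧
      Lθ - Lφ = (-(2 * (Real.pi : ℂ) * Complex.I)) • P :=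
  stmt17_general n A Lθ Lφ θ φ h0θ hθφ hφ hexpθ hspecθ hexpφ hspecφ
end

section
/- Let λ : Mₙ(ℂ) → ℂ be linear with λ(AB) = λ(BA), and suppose λ(P) ∈ ℤ for every idempotent matrix P (P² = P). Then for any invertible matrix A admitting two spectral cuts θ, φ (no eigenvalues on the rays L_θ, L_φ), exp(λ(log_θ A)) = exp(λ(log_φ A)), i.e. the determinant Det^λ(A) = exp(λ(log_θ A)) is independent of the choice of spectral cut. -/
/-!
A linear functional with `λ (A * B) = λ (B * A)` vanishes on the off-diagonal matrix units and
takes the same value `k` on all diagonal ones, so `λ = k • trace`; here `k = λ (E₁₁)` is an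
integer because `E₁₁` is idempotent. Jacobi's formula `det (exp L) = exp (trace L)` then gives
`exp (λ L) = exp (trace L) ^ k = (det A) ^ k` for every logarithm `L` of `A`, whatever the cut.
-/

open NormedSpace

namespace Matrix

section Tracial

variable {m R : Type*} [Fintype m] [DecidableEq m] [CommRing R] {f : Matrix m m R →ₗ[R] R}

theorem map_single_of_ne_of_map_mul_comm (hf : ∀ A B, f (A * B) = f (B * A)) {a b : m}
    (hab : a ≠ b) (c : R) : f (single a b c) = 0 := by
  have hsplit : single a b c = single a a 1 * single a b c := by simp
  rw [hsplit, hf, single_mul_single_of_ne _ _ _ _ hab.symm, map_zero]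

theorem map_single_same_of_map_mul_comm (hf : ∀ A B, f (A * B) = f (B * A)) (a i : m) (c : R) :
    f (single a a c) = c * f (single i i 1) := by
  have hsplit : single a a c = single a i c * single i a 1 := by simp
  have hscale : single i i c = c • single i i (1 : R) := by rw [smul_single, smul_eq_mul, mul_one]
  rw [hsplit, hf, single_mul_single_same, one_mul, hscale, map_smul, smul_eq_mul]

theorem eq_smul_traceLinearMap_of_map_mul_comm (hf : ∀ A B, f (A * B) = f (B * A)) (i : m) :
    f = f (single i i 1) • traceLinearMap m R R := by
  refine ext_linearMap R fun a b => LinearMap.ext fun c => ?_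
  rcases eq_or_ne a b with rfl | hab
  · simp [map_single_same_of_map_mul_comm hf a i, trace_single_eq_same, mul_comm]
  · simp [map_single_of_ne_of_map_mul_comm hf hab, trace_single_eq_of_ne _ _ _ hab]

theorem exists_int_smul_traceLinearMap (hf : ∀ A B, f (A * B) = f (B * A))
    (hint : ∀ P : Matrix m m R, P * P = P → ∃ k : ℤ, f P = k) :
    ∃ k : ℤ, f = (k : R) • traceLinearMap m R R := by
  cases isEmpty_or_nonempty m with
  | inl _ => exact ⟨0, Subsingleton.elim _ _⟩
  | inr hm =>
    obtain ⟨i⟩ := hm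
    obtain ⟨k, hk⟩ := hint (single i i 1) (by rw [single_mul_single_same, mul_one])
    exact ⟨k, hk ▸ eq_smul_traceLinearMap_of_map_mul_comm hf i⟩

end Tracial

theorem det_updateRow_one {m R : Type*} [Fintype m] [DecidableEq m] [CommRing R] (i : m)
    (v : m → R) :
    ((1 : Matrix m m R).updateRow i v).det = v i := by
  have hv : ∑ k, v k • (1 : Matrix m m R) k = v := by
    ext j; simp [Finset.sum_apply, one_apply]
  simpa [hv] using det_updateRow_sum (1 : Matrix m m R) i v

variable {m 𝕂 : Type*} [Fintype m] [DecidableEq m] [RCLike 𝕂]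

variable (m 𝕂) in
def detRowContinuousMultilinear : ContinuousMultilinearMap 𝕂 (fun _ : m => m → 𝕂) 𝕂 where
  toMultilinearMap := (detRowAlternating : (m → 𝕂) [⋀^m]→ₗ[𝕂] 𝕂).toMultilinearMap
  cont := continuous_id.matrix_det

theorem detRowContinuousMultilinear_linearDeriv_one (L : Matrix m m 𝕂) :
    (detRowContinuousMultilinear m 𝕂).linearDeriv (of.symm 1) (of.symm L) = trace L := by
  rw [ContinuousMultilinearMap.linearDeriv_apply]
  exact Finset.sum_congr rfl fun i _ => det_updateRow_one i (L i)

theorem hasDerivAt_det_exp_smul_zero (L : Matrix m m 𝕂) :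
    HasDerivAt (fun t : 𝕂 => (exp (t • L)).det) L.trace 0 := by
  -- Differentiating `exp` needs a Banach-algebra norm on matrices; any one will do.
  open scoped Matrix.Norms.Operator in
  have hrows : HasDerivAt (fun t : 𝕂 => of.symm (exp (t • L))) (of.symm L) 0 := by
    let toPi : Matrix m m 𝕂 →L[𝕂] (m → m → 𝕂) :=
      LinearMap.toContinuousLinearMap (ofLinearEquiv 𝕂).symm.toLinearMap
    have hexp := hasDerivAt_exp_smul_const (𝕂 := 𝕂) L 0
    rw [zero_smul, exp_zero, one_mul] at hexp
    exact toPi.hasFDerivAt.comp_hasDerivAt 0 hexp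
  have h := ((detRowContinuousMultilinear m 𝕂).hasFDerivAt (of.symm 1)).comp_hasDerivAt_of_eq 0
    hrows (by simp)
  rw [← detRowContinuousMultilinear_linearDeriv_one]
  exact h

theorem det_exp_add_smul (L : Matrix m m 𝕂) (s t : 𝕂) :
    (exp ((s + t) • L)).det = (exp (s • L)).det * (exp (t • L)).det := by
  rw [add_smul, Matrix.exp_add_of_commute _ _ (((Commute.refl L).smul_left s).smul_right t),
    det_mul]

theorem hasDerivAt_det_exp_smul (L : Matrix m m 𝕂) (t : 𝕂) :
    HasDerivAt (fun s : 𝕂 => (exp (s • L)).det) ((exp (t • L)).det * L.trace) t := by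
  have hshift : HasDerivAt (fun s : 𝕂 => (exp ((s - t) • L)).det) L.trace t :=
    HasDerivAt.comp_sub_const t t (by simpa using hasDerivAt_det_exp_smul_zero L)
  have hfun : (fun s : 𝕂 => (exp (s • L)).det) =
      fun s => (exp (t • L)).det * (exp ((s - t) • L)).det := by
    ext s
    rw [← det_exp_add_smul, add_sub_cancel]
  rw [hfun]
  exact hshift.const_mul _

theorem det_exp (L : Matrix m m 𝕂) : (exp L).det = exp L.trace := by
  have hderiv : ∀ t : 𝕂,
      HasDerivAt (fun t : 𝕂 => (exp (t • L)).det * exp (t • -L.trace)) 0 t := fun t =>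
    ((hasDerivAt_det_exp_smul L t).mul (hasDerivAt_exp_smul_const (-L.trace) t)).congr_deriv
      (by ring)
  have hconst := is_const_of_deriv_eq_zero (fun t => (hderiv t).differentiableAt)
    (fun t => (hderiv t).deriv) 1 0
  simp only [one_smul, zero_smul, exp_zero, det_one, mul_one] at hconst
  calc (exp L).det = (exp L).det * exp (-L.trace + L.trace) := by simp
    _ = exp L.trace := by rw [exp_add, ← mul_assoc, hconst, one_mul]

end Matrix

theorem stmt18_general (n : ℕ) (lam : Matrix (Fin n) (Fin n) ℂ →ₗ[ℂ] ℂ)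
    (hlam : ∀ A B : Matrix (Fin n) (Fin n) ℂ, lam (A * B) = lam (B * A))
    (hint : ∀ P : Matrix (Fin n) (Fin n) ℂ, P * P = P → ∃ k : ℤ, lam P = (k : ℂ))
    (A Lθ Lφ : Matrix (Fin n) (Fin n) ℂ)
    (hexpθ : NormedSpace.exp Lθ = A)
    (hexpφ : NormedSpace.exp Lφ = A) :
    Complex.exp (lam Lθ) = Complex.exp (lam Lφ) := by
  obtain ⟨k, hk⟩ := Matrix.exists_int_smul_traceLinearMap hlam hint
  have hlog : ∀ L, exp L = A → Complex.exp (lam L) = A.det ^ k := fun L hL => by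
    rw [hk, LinearMap.smul_apply, Matrix.traceLinearMap_apply, smul_eq_mul, Complex.exp_int_mul,
      Complex.exp_eq_exp_ℂ, ← Matrix.det_exp, hL]
  rw [hlog Lθ hexpθ, hlog Lφ hexpφ]

/-- If a tracial linear functional `λ` on matrices takes integer values on idempotents, then the
determinant `Det^λ (A) = exp (λ (log_θ A))` is independent of the choice of spectral cut `θ`.
Here `log_θ A` and `log_φ A` are the logarithms of `A` with respect to the spectral cuts
`0 ≤ θ < φ < 2π`, characterized as commuting logarithms of `A` whose spectra lie in the
horizontal strips determined by the branch cuts. -/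
theorem stmt18 (n : ℕ) (lam : Matrix (Fin n) (Fin n) ℂ →ₗ[ℂ] ℂ)
    (hlam : ∀ A B : Matrix (Fin n) (Fin n) ℂ, lam (A * B) = lam (B * A))
    (hint : ∀ P : Matrix (Fin n) (Fin n) ℂ, P * P = P → ∃ k : ℤ, lam P = (k : ℂ))
    (A Lθ Lφ : Matrix (Fin n) (Fin n) ℂ) (θ φ : ℝ)
    (h0θ : 0 ≤ θ) (hθφ : θ < φ) (hφ : φ < 2 * Real.pi)
    (hA : IsUnit A)
    (hrayθ : ∀ z ∈ spectrum ℂ A, ∀ r : ℝ, 0 ≤ r →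
      z ≠ (r : ℂ) * Complex.exp ((θ : ℂ) * Complex.I))
    (hrayφ : ∀ z ∈ spectrum ℂ A, ∀ r : ℝ, 0 ≤ r →
      z ≠ (r : ℂ) * Complex.exp ((φ : ℂ) * Complex.I))
    (hexpθ : NormedSpace.exp Lθ = A) (hcommθ : Commute A Lθ)
    (hspecθ : ∀ z ∈ spectrum ℂ Lθ, θ < z.im ∧ z.im < θ + 2 * Real.pi)
    (hexpφ : NormedSpace.exp Lφ = A) (hcommφ : Commute A Lφ)
    (hspecφ : ∀ z ∈ spectrum ℂ Lφ, φ < z.im ∧ z.im < φ + 2 * Real.pi) :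
    Complex.exp (lam Lθ) = Complex.exp (lam Lφ) :=
  stmt18_general n lam hlam hint A Lθ Lφ hexpθ hexpφ
end
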